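/- Let p > 1 and define S : C_D([0,1]) → ℝ ∪ {+∞} by S(v) = (1/2)∫₀¹ g(s)² ds − (1/(p+1))∫₀¹ |v(s)|^{p+1} ds if there exists g ∈ L²(0,1) with v(x) = ∫₀ˣ g(s) ds for all x ∈ [0,1], and S(v) = +∞ otherwise. Then S is sequentially lower semicontinuous with respect to uniform convergence: if (v_k) ⊆ C_D([0,1]) converges uniformly on [0,1] to v_∞ ∈ C_D([0,1]), then S(v_∞) ≤ liminf_{k→∞} S(v_k). -/

import Mathlib

open Set MeasureTheory

open Classical in
/-- The potential `S : C_D([0,1]) → ℝ ∪ {+∞}`: if `v` admits `g ∈ L²(0,1)` with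
`v(x) = ∫₀ˣ g(s) ds` on `[0,1]` then
`S(v) = (1/2)∫₀¹ g² − (1/(p+1))∫₀¹ |v|^{p+1}`, and `S(v) = +∞` otherwise. -/
noncomputable def potSE (p : ℝ) (v : ℝ → ℝ) : EReal :=
  if h : ∃ g : ℝ → ℝ,
      MemLp g 2 (volume.restrict (Ioc (0:ℝ) 1)) ∧
      ∀ x ∈ Icc (0:ℝ) 1, v x = ∫ s in (0:ℝ)..x, g s then
    (((1/2) * (∫ s in (0:ℝ)..1, h.choose s ^ 2)
      - (1/(p+1)) * ∫ s in (0:ℝ)..1, |v s| ^ (p + 1) : ℝ) : EReal)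
  else ⊤

/-!
For continuous `f` with `f 0 = 0` the Dirichlet energy is read off the dyadic energies
`Qₙ f = ∑ⱼ 2ⁿ (f ((j+1)/2ⁿ) - f (j/2ⁿ))²`. If `f x = ∫₀ˣ g` then `Qₙ f ≤ ∫₀¹ g²` (Jensen on each
dyadic cell). Conversely, if `Qₙ f ≤ C` for all `n`, the step functions `Mₙ` of dyadic slopes
satisfy `⟪Mₙ, Mₘ⟫ = Qₙ` for `n ≤ m`, so `‖Mₘ - Mₙ‖² = Qₘ - Qₙ`; the increasing bounded sequence
`Qₙ` makes `Mₙ` Cauchy in `L²(0,1)`, and its limit `g` has `∫₀¹ g² ≤ C` and `∫₀ˣ g = f x`, first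
at dyadic `x` and then everywhere by continuity.

Each `Qₙ` depends on finitely many point values, so it passes to the uniform limit, as does
`∫₀¹ |v|^{p+1}`. Hence `S (v k) < b` frequently gives `Qₙ v∞ ≤ 2 (b + ∫₀¹ |v∞|^{p+1} / (p+1))`
for every `n`, and therefore `S v∞ ≤ b`; the primitive representation is unique a.e. by the
Lebesgue differentiation theorem, so `S v∞` is computed with any representative.
-/

open Filter Topology
open scoped RealInnerProductSpace

noncomputable section

def IsL2Primitive (v g : ℝ → ℝ) : Prop :=
  MemLp g 2 (volume.restrict (Ioc (0:ℝ) 1)) ∧ ∀ x ∈ Icc (0:ℝ) 1, v x = ∫ s in (0:ℝ)..x, g s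

def dyadicPoint (n j : ℕ) : ℝ := j / 2 ^ n

def dyadicIncrement (f : ℝ → ℝ) (n j : ℕ) : ℝ :=
  f (dyadicPoint n (j + 1)) - f (dyadicPoint n j)

def dyadicSlope (f : ℝ → ℝ) (n : ℕ) (x : ℝ) : ℝ :=
  ∑ j ∈ Finset.range (2 ^ n),
    (Ioc (dyadicPoint n j) (dyadicPoint n (j + 1))).indicator
      (fun _ => 2 ^ n * dyadicIncrement f n j) x

def dyadicEnergy (f : ℝ → ℝ) (n : ℕ) : ℝ :=
  ∑ j ∈ Finset.range (2 ^ n), 2 ^ n * dyadicIncrement f n j ^ 2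

lemma dyadicPoint_zero (n : ℕ) : dyadicPoint n 0 = 0 := by simp [dyadicPoint]

lemma dyadicPoint_two_pow (n : ℕ) : dyadicPoint n (2 ^ n) = 1 := by simp [dyadicPoint]

lemma dyadicPoint_nonneg (n j : ℕ) : 0 ≤ dyadicPoint n j := by unfold dyadicPoint; positivity

lemma dyadicPoint_mono (n : ℕ) : Monotone (dyadicPoint n) := fun i j hij => by
  unfold dyadicPoint; gcongr

lemma dyadicPoint_le_one {n j : ℕ} (h : j ≤ 2 ^ n) : dyadicPoint n j ≤ 1 :=
  dyadicPoint_two_pow n ▸ dyadicPoint_mono n h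

lemma dyadicPoint_mem_Icc {n j : ℕ} (h : j ≤ 2 ^ n) : dyadicPoint n j ∈ Icc (0:ℝ) 1 :=
  ⟨dyadicPoint_nonneg n j, dyadicPoint_le_one h⟩

lemma dyadicPoint_succ_sub (n j : ℕ) : dyadicPoint n (j + 1) - dyadicPoint n j = 1 / 2 ^ n := by
  unfold dyadicPoint; push_cast; ring

lemma dyadicPoint_mul_two_pow_sub {n m : ℕ} (h : n ≤ m) (j : ℕ) :
    dyadicPoint m (j * 2 ^ (m - n)) = dyadicPoint n j := by
  unfold dyadicPoint
  rw [← Nat.add_sub_cancel' h, pow_add, Nat.add_sub_cancel_left]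
  push_cast
  field_simp

lemma Icc_subset_closure_dyadicPoint :
    Icc (0:ℝ) 1 ⊆ closure {x | ∃ n j, j ≤ 2 ^ n ∧ dyadicPoint n j = x} := by
  intro x hx
  have hfloor (n : ℕ) : ⌊x * 2 ^ n⌋₊ ≤ 2 ^ n :=
    Nat.floor_le_of_le <| by
      simpa using mul_le_mul_of_nonneg_right hx.2 (by positivity : (0:ℝ) ≤ 2 ^ n)
  have hbounds (n : ℕ) : x - (1 / 2) ^ n ≤ dyadicPoint n ⌊x * 2 ^ n⌋₊ ∧
      dyadicPoint n ⌊x * 2 ^ n⌋₊ ≤ x := by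
    have h2 : (0:ℝ) < 2 ^ n := by positivity
    unfold dyadicPoint
    rw [le_div_iff₀ h2, div_le_iff₀ h2, sub_mul, div_pow, one_pow, div_mul_cancel₀ _ h2.ne']
    exact ⟨by linarith [Nat.lt_floor_add_one (x * 2 ^ n)],
      Nat.floor_le (mul_nonneg hx.1 h2.le)⟩
  have hlim : Tendsto (fun n : ℕ => x - (1 / 2 : ℝ) ^ n) atTop (𝓝 x) := by
    simpa using tendsto_const_nhds.sub
      (tendsto_pow_atTop_nhds_zero_of_lt_one (by norm_num : (0:ℝ) ≤ 1 / 2) (by norm_num))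
  refine mem_closure_of_tendsto (tendsto_of_tendsto_of_tendsto_of_le_of_le hlim
    tendsto_const_nhds (fun n => (hbounds n).1) fun n => (hbounds n).2) ?_
  exact Eventually.of_forall fun n => ⟨n, _, hfloor n, rfl⟩

lemma dyadicSlope_eq_of_mem (f : ℝ → ℝ) {n j : ℕ} (hj : j < 2 ^ n) {x : ℝ}
    (hx : x ∈ Ioc (dyadicPoint n j) (dyadicPoint n (j + 1))) :
    dyadicSlope f n x = 2 ^ n * dyadicIncrement f n j := by
  rw [dyadicSlope, Finset.sum_eq_single_of_mem j (Finset.mem_range.2 hj), indicator_of_mem hx]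
  intro i _ hij
  refine indicator_of_notMem (fun hi => ?_) _
  rcases Nat.lt_or_gt_of_ne hij with h | h
  · linarith [hi.2, hx.1, dyadicPoint_mono n (Nat.succ_le_of_lt h)]
  · linarith [hi.1, hx.2, dyadicPoint_mono n (Nat.succ_le_of_lt h)]

lemma integrable_dyadicSlope (f : ℝ → ℝ) (n : ℕ) : Integrable (dyadicSlope f n) := by
  refine integrable_finsetSum _ fun _ _ => ?_
  exact (integrable_indicator_iff measurableSet_Ioc).2 (integrableOn_const (by simp))

lemma memLp_dyadicSlope (f : ℝ → ℝ) (n : ℕ) {μ : Measure ℝ} [IsFiniteMeasure μ] :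
    MemLp (dyadicSlope f n) 2 μ :=
  memLp_finsetSum _ fun _ _ =>
    memLp_indicator_const 2 measurableSet_Ioc _ (Or.inr (measure_ne_top μ _))

lemma integral_dyadicSlope_mul (f h : ℝ → ℝ) {n j : ℕ} (hj : j < 2 ^ n) :
    ∫ x in dyadicPoint n j..dyadicPoint n (j + 1), dyadicSlope f n x * h x
      = 2 ^ n * dyadicIncrement f n j * ∫ x in dyadicPoint n j..dyadicPoint n (j + 1), h x := by
  rw [← intervalIntegral.integral_const_mul]
  refine intervalIntegral.integral_congr_ae (Eventually.of_forall fun x hx => ?_)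
  rw [uIoc_of_le (dyadicPoint_mono n j.le_succ)] at hx
  rw [dyadicSlope_eq_of_mem f hj hx]

lemma integral_dyadicSlope_cell (f : ℝ → ℝ) {n j : ℕ} (hj : j < 2 ^ n) :
    ∫ x in dyadicPoint n j..dyadicPoint n (j + 1), dyadicSlope f n x = dyadicIncrement f n j := by
  have h := integral_dyadicSlope_mul f 1 hj
  simp only [Pi.one_apply, mul_one, intervalIntegral.integral_const, dyadicPoint_succ_sub,
    smul_eq_mul] at h
  rw [h]
  field_simp

lemma integral_zero_dyadicPoint_dyadicSlope (f : ℝ → ℝ) {m w : ℕ} (hw : w ≤ 2 ^ m) :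
    ∫ x in (0:ℝ)..dyadicPoint m w, dyadicSlope f m x = f (dyadicPoint m w) - f 0 := by
  rw [← dyadicPoint_zero m, ← intervalIntegral.sum_integral_adjacent_intervals
    fun k _ => (integrable_dyadicSlope f m).intervalIntegrable, Finset.sum_congr rfl fun k hk => integral_dyadicSlope_cell f
    ((Finset.mem_range.1 hk).trans_le hw)]
  exact Finset.sum_range_sub (fun k => f (dyadicPoint m k)) w

lemma integral_dyadicSlope_cell_of_le (f : ℝ → ℝ) {n m j : ℕ} (hnm : n ≤ m) (hj : j < 2 ^ n) :
    ∫ x in dyadicPoint n j..dyadicPoint n (j + 1), dyadicSlope f m x = dyadicIncrement f n j := by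
  have hle : (j + 1) * 2 ^ (m - n) ≤ 2 ^ m := by
    calc (j + 1) * 2 ^ (m - n) ≤ 2 ^ n * 2 ^ (m - n) := Nat.mul_le_mul_right _ hj
      _ = 2 ^ m := by rw [← pow_add, Nat.add_sub_cancel' hnm]
  have hint (b : ℝ) := (integrable_dyadicSlope f m).intervalIntegrable (a := 0) (b := b)
  rw [← intervalIntegral.integral_interval_sub_left (hint _) (hint _),
    ← dyadicPoint_mul_two_pow_sub hnm, ← dyadicPoint_mul_two_pow_sub hnm j,
    integral_zero_dyadicPoint_dyadicSlope f hle,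
    integral_zero_dyadicPoint_dyadicSlope f ((Nat.mul_le_mul_right _ j.le_succ).trans hle),
    dyadicIncrement, dyadicPoint_mul_two_pow_sub hnm, dyadicPoint_mul_two_pow_sub hnm]
  ring

lemma integral_dyadicSlope_mul_dyadicSlope (f : ℝ → ℝ) {n m : ℕ} (hnm : n ≤ m) :
    ∫ x in (0:ℝ)..1, dyadicSlope f n x * dyadicSlope f m x = dyadicEnergy f n := by
  have hint : Integrable (fun x => dyadicSlope f n x * dyadicSlope f m x)
      (volume.restrict (Ioc (0:ℝ) 1)) :=
    (memLp_dyadicSlope f n).integrable_mul (memLp_dyadicSlope f m)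
  have hint01 := (intervalIntegrable_iff_integrableOn_Ioc_of_le zero_le_one).2 hint
  rw [← dyadicPoint_zero n, ← dyadicPoint_two_pow n,
    ← intervalIntegral.sum_integral_adjacent_intervals fun k hk => hint01.mono_set ?_]
  · refine Finset.sum_congr rfl fun j hj => ?_
    rw [Finset.mem_range] at hj
    rw [integral_dyadicSlope_mul f _ hj, integral_dyadicSlope_cell_of_le f hnm hj]
    ring
  · rw [uIcc_of_le zero_le_one]
    exact uIcc_subset_Icc (dyadicPoint_mem_Icc hk.le) (dyadicPoint_mem_Icc hk)

lemma cauchySeq_of_inner_eq_norm_sq {E : Type*} [NormedAddCommGroup E] [InnerProductSpace ℝ E]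
    {F : ℕ → E} (hinner : ∀ n m, n ≤ m → ⟪F n, F m⟫ = ‖F n‖ ^ 2) {C : ℝ}
    (hC : ∀ n, ‖F n‖ ^ 2 ≤ C) : CauchySeq F := by
  have hdist (n m : ℕ) (hnm : n ≤ m) : ‖F m - F n‖ ^ 2 = ‖F m‖ ^ 2 - ‖F n‖ ^ 2 := by
    rw [norm_sub_sq_real, real_inner_comm, hinner n m hnm]
    ring
  have hmono : Monotone fun n => ‖F n‖ ^ 2 := fun n m hnm => by
    linarith [hdist n m hnm, sq_nonneg ‖F m - F n‖]
  have hcauchy := (tendsto_atTop_ciSup hmono ⟨C, forall_mem_range.2 hC⟩).cauchySeq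
  rw [Metric.cauchySeq_iff'] at hcauchy ⊢
  intro ε hε
  obtain ⟨N, hN⟩ := hcauchy (ε ^ 2) (by positivity)
  refine ⟨N, fun n hn => ?_⟩
  rw [dist_eq_norm, ← sq_lt_sq₀ (norm_nonneg _) hε.le, hdist N n hn]
  exact (le_abs_self _).trans_lt (hN n hn)

lemma intervalIntegral_sq_eq_norm_sq (u : Lp ℝ 2 (volume.restrict (Ioc (0:ℝ) 1))) :
    ∫ x in (0:ℝ)..1, u x ^ 2 = ‖u‖ ^ 2 := by
  rw [← real_inner_self_eq_norm_sq, L2.inner_def, intervalIntegral.integral_of_le zero_le_one]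
  simp [sq]

lemma inner_indicatorConstLp_Ioc (u : Lp ℝ 2 (volume.restrict (Ioc (0:ℝ) 1))) {x : ℝ}
    (hx0 : 0 ≤ x) (hx1 : x ≤ 1) :
    ⟪indicatorConstLp 2 measurableSet_Ioc (measure_ne_top _ (Ioc 0 x)) (1:ℝ), u⟫
      = ∫ t in (0:ℝ)..x, u t := by
  rw [L2.inner_indicatorConstLp_one, Measure.restrict_restrict measurableSet_Ioc,
    inter_eq_left.2 (Ioc_subset_Ioc_right hx1), intervalIntegral.integral_of_le hx0]

def dyadicSlopeL2 (f : ℝ → ℝ) (n : ℕ) : Lp ℝ 2 (volume.restrict (Ioc (0:ℝ) 1)) :=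
  (memLp_dyadicSlope f n).toLp _

lemma inner_dyadicSlopeL2 (f : ℝ → ℝ) {n m : ℕ} (hnm : n ≤ m) :
    ⟪dyadicSlopeL2 f n, dyadicSlopeL2 f m⟫ = dyadicEnergy f n := by
  rw [L2.inner_def, ← integral_dyadicSlope_mul_dyadicSlope f hnm,
    intervalIntegral.integral_of_le zero_le_one]
  refine integral_congr_ae ?_
  filter_upwards [(memLp_dyadicSlope f n).coeFn_toLp, (memLp_dyadicSlope f m).coeFn_toLp]
    with x hn hm
  simp [dyadicSlopeL2, hn, hm, mul_comm]

lemma norm_dyadicSlopeL2_sq (f : ℝ → ℝ) (n : ℕ) :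
    ‖dyadicSlopeL2 f n‖ ^ 2 = dyadicEnergy f n := by
  rw [← real_inner_self_eq_norm_sq, inner_dyadicSlopeL2 f le_rfl]

lemma intervalIntegral_dyadicSlopeL2 (f : ℝ → ℝ) (n : ℕ) {x : ℝ} (hx0 : 0 ≤ x) (hx1 : x ≤ 1) :
    ∫ t in (0:ℝ)..x, dyadicSlopeL2 f n t = ∫ t in (0:ℝ)..x, dyadicSlope f n t := by
  have h := (ae_restrict_iff' measurableSet_Ioc).1
    (memLp_dyadicSlope f n (μ := volume.restrict (Ioc (0:ℝ) 1))).coeFn_toLp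
  refine intervalIntegral.integral_congr_ae (h.mono fun t ht htx => ht ?_)
  rw [uIoc_of_le hx0] at htx
  exact Ioc_subset_Ioc_right hx1 htx

lemma integral_zero_dyadicPoint_of_tendsto {f : ℝ → ℝ}
    {G : Lp ℝ 2 (volume.restrict (Ioc (0:ℝ) 1))} (hG : Tendsto (dyadicSlopeL2 f) atTop (𝓝 G))
    {n w : ℕ} (hw : w ≤ 2 ^ n) :
    ∫ t in (0:ℝ)..dyadicPoint n w, G t = f (dyadicPoint n w) - f 0 := by
  obtain ⟨hx0, hx1⟩ := dyadicPoint_mem_Icc hw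
  set χ := indicatorConstLp 2 measurableSet_Ioc
    (measure_ne_top (volume.restrict (Ioc (0:ℝ) 1)) (Ioc 0 (dyadicPoint n w))) (1:ℝ)
  have hconst : ∀ m ≥ n, ⟪χ, dyadicSlopeL2 f m⟫ = f (dyadicPoint n w) - f 0 := by
    intro m hm
    have hwm : w * 2 ^ (m - n) ≤ 2 ^ m := by
      calc w * 2 ^ (m - n) ≤ 2 ^ n * 2 ^ (m - n) := Nat.mul_le_mul_right _ hw
        _ = 2 ^ m := by rw [← pow_add, Nat.add_sub_cancel' hm]
    rw [inner_indicatorConstLp_Ioc _ hx0 hx1, intervalIntegral_dyadicSlopeL2 f m hx0 hx1,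
      ← dyadicPoint_mul_two_pow_sub hm, integral_zero_dyadicPoint_dyadicSlope f hwm]
  rw [← inner_indicatorConstLp_Ioc G hx0 hx1]
  exact tendsto_nhds_unique (tendsto_const_nhds.inner hG)
    (tendsto_const_nhds.congr' (eventually_atTop.2 ⟨n, fun m hm => (hconst m hm).symm⟩))

theorem exists_isL2Primitive_of_dyadicEnergy_le {f : ℝ → ℝ} (hf : ContinuousOn f (Icc 0 1))
    (hf0 : f 0 = 0) {C : ℝ} (hC : ∀ n, dyadicEnergy f n ≤ C) :
    ∃ g, IsL2Primitive f g ∧ ∫ x in (0:ℝ)..1, g x ^ 2 ≤ C := by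
  have hbound (n : ℕ) : ‖dyadicSlopeL2 f n‖ ^ 2 ≤ C := (norm_dyadicSlopeL2_sq f n).trans_le (hC n)
  obtain ⟨G, hG⟩ := cauchySeq_tendsto_of_complete (cauchySeq_of_inner_eq_norm_sq
    (fun n m hnm => by rw [inner_dyadicSlopeL2 f hnm, norm_dyadicSlopeL2_sq]) hbound)
  have hprim : ContinuousOn (fun x => ∫ t in (0:ℝ)..x, G t) (Icc 0 1) := by
    rw [← uIcc_of_le zero_le_one]
    refine intervalIntegral.continuousOn_primitive_interval ?_
    rw [uIcc_of_le zero_le_one, integrableOn_Icc_iff_integrableOn_Ioc]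
    exact (Lp.memLp G).integrable one_le_two
  refine ⟨G, ⟨Lp.memLp G, fun x hx => ?_⟩, ?_⟩
  · refine EqOn.of_subset_closure ?_ hf hprim ?_ Icc_subset_closure_dyadicPoint hx
    · rintro _ ⟨n, j, hj, rfl⟩
      dsimp only
      rw [integral_zero_dyadicPoint_of_tendsto hG hj, hf0, sub_zero]
    · rintro _ ⟨n, j, hj, rfl⟩
      exact dyadicPoint_mem_Icc hj
  · rw [intervalIntegral_sq_eq_norm_sq]
    exact le_of_tendsto' ((continuous_pow 2).tendsto _ |>.comp hG.norm) hbound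

lemma sq_intervalIntegral_le {g : ℝ → ℝ} {a b : ℝ} (hab : a ≤ b)
    (hg : IntervalIntegrable g volume a b)
    (hg2 : IntervalIntegrable (fun x => g x ^ 2) volume a b) :
    (∫ x in a..b, g x) ^ 2 ≤ (b - a) * ∫ x in a..b, g x ^ 2 := by
  rcases hab.eq_or_lt with rfl | hlt
  · simp
  have hjensen := (Even.convexOn_pow (n := 2) even_two).map_set_average_le
    (continuous_pow 2).continuousOn isClosed_univ (by simp [hlt]) (by simp)
    (Eventually.of_forall fun _ => mem_univ _) hg.1 hg2.1
  simp only [setAverage_eq, Real.volume_real_Ioc_of_le hab, smul_eq_mul,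
    ← intervalIntegral.integral_of_le hab] at hjensen
  have hL : 0 < b - a := sub_pos.2 hlt
  rw [mul_pow, inv_pow, ← div_eq_inv_mul, ← div_eq_inv_mul, div_le_div_iff₀ (by positivity) hL]
    at hjensen
  nlinarith

lemma tendsto_dyadicEnergy {ι : Type*} {l : Filter ι} {v : ι → ℝ → ℝ} {u : ℝ → ℝ}
    (h : ∀ x ∈ Icc (0:ℝ) 1, Tendsto (fun k => v k x) l (𝓝 (u x))) (n : ℕ) :
    Tendsto (fun k => dyadicEnergy (v k) n) l (𝓝 (dyadicEnergy u n)) :=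
  tendsto_finsetSum _ fun _ hj => (((h _ (dyadicPoint_mem_Icc (Finset.mem_range.1 hj))).sub
    (h _ (dyadicPoint_mem_Icc (Finset.mem_range.1 hj).le))).pow 2).const_mul _

namespace IsL2Primitive

variable {v g : ℝ → ℝ}

lemma intervalIntegrable (h : IsL2Primitive v g) {a b : ℝ} (ha : a ∈ Icc (0:ℝ) 1)
    (hb : b ∈ Icc (0:ℝ) 1) : IntervalIntegrable g volume a b :=
  ((intervalIntegrable_iff_integrableOn_Ioc_of_le zero_le_one).2
    (h.1.integrable one_le_two)).mono_set
      (by rw [uIcc_of_le zero_le_one]; exact uIcc_subset_Icc ha hb)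

lemma intervalIntegrable_sq (h : IsL2Primitive v g) {a b : ℝ} (ha : a ∈ Icc (0:ℝ) 1)
    (hb : b ∈ Icc (0:ℝ) 1) : IntervalIntegrable (fun x => g x ^ 2) volume a b :=
  ((intervalIntegrable_iff_integrableOn_Ioc_of_le zero_le_one).2
    h.1.integrable_sq).mono_set (by rw [uIcc_of_le zero_le_one]; exact uIcc_subset_Icc ha hb)

lemma ae_eq {g' : ℝ → ℝ} (h : IsL2Primitive v g) (h' : IsL2Primitive v g') :
    ∀ᵐ x, x ∈ Ioc (0:ℝ) 1 → g x = g' x := by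
  have h0 : (0:ℝ) ∈ Icc (0:ℝ) 1 := ⟨le_rfl, zero_le_one⟩
  have h1 : (1:ℝ) ∈ Icc (0:ℝ) 1 := ⟨zero_le_one, le_rfl⟩
  have hmem : (0:ℝ) ∈ uIcc 0 1 := left_mem_uIcc
  have hne : ∀ᵐ x : ℝ, x ≠ 1 := by simp [ae_iff, measure_singleton]
  filter_upwards [(h.intervalIntegrable h0 h1).ae_hasDerivAt_integral,
    (h'.intervalIntegrable h0 h1).ae_hasDerivAt_integral, hne] with x hderiv hderiv' hx1 hx
  have hIoo : x ∈ Ioo (0:ℝ) 1 := ⟨hx.1, hx.2.lt_of_ne hx1⟩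
  have hprim : (fun y => ∫ t in (0:ℝ)..y, g t) =ᶠ[𝓝 x] fun y => ∫ t in (0:ℝ)..y, g' t :=
    eventually_of_mem (Ioo_mem_nhds hIoo.1 hIoo.2) fun y hy =>
      (h.2 y (Ioo_subset_Icc_self hy)).symm.trans (h'.2 y (Ioo_subset_Icc_self hy))
  have hxI : x ∈ uIcc (0:ℝ) 1 := by
    rw [uIcc_of_le zero_le_one]
    exact Ioc_subset_Icc_self hx
  exact (hderiv hxI 0 hmem).unique ((hderiv' hxI 0 hmem).congr_of_eventuallyEq hprim)

lemma dyadicIncrement_eq (h : IsL2Primitive v g) {n j : ℕ} (hj : j < 2 ^ n) :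
    dyadicIncrement v n j = ∫ x in dyadicPoint n j..dyadicPoint n (j + 1), g x := by
  have h0 : (0:ℝ) ∈ Icc (0:ℝ) 1 := ⟨le_rfl, zero_le_one⟩
  rw [dyadicIncrement, h.2 _ (dyadicPoint_mem_Icc hj), h.2 _ (dyadicPoint_mem_Icc hj.le),
    intervalIntegral.integral_interval_sub_left (h.intervalIntegrable h0 (dyadicPoint_mem_Icc hj))
      (h.intervalIntegrable h0 (dyadicPoint_mem_Icc hj.le))]

lemma dyadicEnergy_le (h : IsL2Primitive v g) (n : ℕ) :
    dyadicEnergy v n ≤ ∫ x in (0:ℝ)..1, g x ^ 2 := by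
  rw [← dyadicPoint_zero n, ← dyadicPoint_two_pow n,
    ← intervalIntegral.sum_integral_adjacent_intervals fun k hk =>
      h.intervalIntegrable_sq (dyadicPoint_mem_Icc hk.le) (dyadicPoint_mem_Icc hk)]
  refine Finset.sum_le_sum fun j hj => ?_
  rw [Finset.mem_range] at hj
  have hjensen := sq_intervalIntegral_le (dyadicPoint_mono n j.le_succ)
    (h.intervalIntegrable (dyadicPoint_mem_Icc hj.le) (dyadicPoint_mem_Icc hj))
    (h.intervalIntegrable_sq (dyadicPoint_mem_Icc hj.le) (dyadicPoint_mem_Icc hj))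
  rw [← h.dyadicIncrement_eq hj, dyadicPoint_succ_sub] at hjensen
  calc 2 ^ n * dyadicIncrement v n j ^ 2
      ≤ 2 ^ n * (1 / 2 ^ n * ∫ x in dyadicPoint n j..dyadicPoint n (j + 1), g x ^ 2) := by
        gcongr
    _ = ∫ x in dyadicPoint n j..dyadicPoint n (j + 1), g x ^ 2 := by field_simp

end IsL2Primitive

lemma tendsto_intervalIntegral_comp_of_tendstoUniformlyOn {φ : ℝ → ℝ} (hφ : Continuous φ)
    {v : ℕ → ℝ → ℝ} {u : ℝ → ℝ} {a b : ℝ} (hab : a ≤ b) (hv : ∀ k, ContinuousOn (v k) (Icc a b))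
    (hvu : TendstoUniformlyOn v u atTop (Icc a b)) :
    Tendsto (fun k => ∫ x in a..b, φ (v k x)) atTop (𝓝 (∫ x in a..b, φ (u x))) := by
  obtain ⟨B, hB⟩ := isCompact_Icc.exists_bound_of_continuousOn
    (hvu.continuousOn (Frequently.of_forall hv))
  obtain ⟨M, hM⟩ := isCompact_Icc.exists_bound_of_continuousOn
    (s := Icc (-(B + 1)) (B + 1)) hφ.continuousOn
  rw [← uIcc_of_le hab] at hv hvu hB
  refine intervalIntegral.tendsto_integral_filter_of_dominated_convergence (fun _ => M)
    (Eventually.of_forall fun k => ?_) ?_ intervalIntegrable_const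
    (Eventually.of_forall fun x hx => (hφ.tendsto _).comp (hvu.tendsto_at (uIoc_subset_uIcc hx)))
  · exact ((hφ.comp_continuousOn (hv k)).mono uIoc_subset_uIcc).aestronglyMeasurable
      measurableSet_uIoc
  · refine (Metric.tendstoUniformlyOn_iff.1 hvu 1 one_pos).mono fun k hk =>
      Eventually.of_forall fun x hx => hM _ ?_
    have hdist := hk x (uIoc_subset_uIcc hx)
    have hbound := hB x (uIoc_subset_uIcc hx)
    rw [Real.dist_eq, abs_lt] at hdist
    rw [Real.norm_eq_abs, abs_le] at hbound
    constructor <;> linarith [hdist.1, hdist.2, hbound.1, hbound.2]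

lemma potSE_eq_of_isL2Primitive (p : ℝ) {v g : ℝ → ℝ} (h : IsL2Primitive v g) :
    potSE p v = (((1/2) * (∫ s in (0:ℝ)..1, g s ^ 2)
      - (1/(p+1)) * ∫ s in (0:ℝ)..1, |v s| ^ (p + 1) : ℝ) : EReal) := by
  have hex : ∃ g, IsL2Primitive v g := ⟨g, h⟩
  unfold IsL2Primitive at hex
  rw [potSE, dif_pos hex]
  congr 3
  refine intervalIntegral.integral_congr_ae
    ((IsL2Primitive.ae_eq hex.choose_spec h).mono fun x hx hxI => ?_)
  rw [uIoc_of_le zero_le_one] at hxI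
  rw [hx hxI]

lemma dyadicEnergy_le_of_potSE_lt {p b : ℝ} {u : ℝ → ℝ} (h : potSE p u < b) (n : ℕ) :
    dyadicEnergy u n ≤ 2 * (b + (1/(p+1)) * ∫ s in (0:ℝ)..1, |u s| ^ (p + 1)) := by
  by_cases hex : ∃ g, IsL2Primitive u g
  · obtain ⟨g, hg⟩ := hex
    rw [potSE_eq_of_isL2Primitive p hg, EReal.coe_lt_coe_iff] at h
    linarith [hg.dyadicEnergy_le n]
  · unfold IsL2Primitive at hex
    rw [potSE, dif_neg hex] at h
    exact absurd h not_top_lt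

/-- The potential `S` is sequentially lower semicontinuous with respect to uniform
convergence on `C_D([0,1])`. -/
theorem stmt9 (p : ℝ) (hp : 1 < p) (v : ℕ → ℝ → ℝ) (vinf : ℝ → ℝ)
    (hv : ∀ k, ContinuousOn (v k) (Icc (0:ℝ) 1) ∧ v k 0 = 0 ∧ v k 1 = 0)
    (hvinf : ContinuousOn vinf (Icc (0:ℝ) 1) ∧ vinf 0 = 0 ∧ vinf 1 = 0)
    (hconv : TendstoUniformlyOn v vinf Filter.atTop (Icc (0:ℝ) 1)) :
    potSE p vinf ≤ Filter.liminf (fun k => potSE p (v k)) Filter.atTop := by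
  set c : (ℝ → ℝ) → ℝ := fun u => (1/(p+1)) * ∫ s in (0:ℝ)..1, |u s| ^ (p + 1)
  have hc : Tendsto (fun k => c (v k)) atTop (𝓝 (c vinf)) :=
    (tendsto_intervalIntegral_comp_of_tendstoUniformlyOn
      (continuous_abs.rpow_const fun _ => Or.inr (by linarith)) zero_le_one (fun k => (hv k).1)
      hconv).const_mul _
  refine le_of_forall_gt_imp_ge_of_dense fun b hb => ?_
  obtain ⟨b', hb', hb'b⟩ := EReal.exists_between_coe_real hb
  have hE (n : ℕ) : dyadicEnergy vinf n ≤ 2 * (b' + c vinf) := by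
    have hfreq : ∃ᶠ k in atTop, dyadicEnergy (v k) n - 2 * c (v k) ∈ Iic (2 * b') :=
      (frequently_lt_of_liminf_lt (by isBoundedDefault) hb').mono fun k hk =>
        mem_Iic.2 (by linarith [dyadicEnergy_le_of_potSE_lt hk n])
    have hlim := isClosed_Iic.mem_of_frequently_of_tendsto hfreq
      ((tendsto_dyadicEnergy (fun x hx => hconv.tendsto_at hx) n).sub (hc.const_mul 2))
    linarith [mem_Iic.1 hlim]
  obtain ⟨g, hg, hgE⟩ := exists_isL2Primitive_of_dyadicEnergy_le hvinf.1 hvinf.2.1 hE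
  refine le_trans ?_ hb'b.le
  rw [potSE_eq_of_isL2Primitive p hg, EReal.coe_le_coe_iff]
  linarith
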